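/- (Matsuo–Cherednik, antisymmetrization) Let n ≥ 2, κ ∈ ℂ, λ_1,…,λ_n ∈ ℂ, and let U ⊆ ℂ^n be an open set on which z_i ≠ z_j for all i ≠ j. Suppose holomorphic functions I_σ : U → ℂ, indexed by σ ∈ S_n, satisfy the KZ equations in components: ∂_i I_σ = κ Σ_{j ≠ i} I_{σ∘(i j)} / (z_i − z_j) + λ_{σ(i)} I_σ for all i = 1,…,n and all σ ∈ S_n. Then ψ = Σ_{σ ∈ S_n} (−1)^σ I_σ satisfies −Δψ + κ(κ+1) Σ_{i ≠ j} ψ/(z_i − z_j)^2 = E ψ on U, where Δ = ∂_1^2 + ⋯ + ∂_n^2 and E = −(λ_1^2 + ⋯ + λ_n^2). -/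

import Mathlib

/-!
Write `ψ = ∑_σ (−1)^σ I_σ` and `F_m = ∑_σ (−1)^σ λ_{σ(m)} I_σ`. Since `(−1)^{σ(i j)} = −(−1)^σ`,
the KZ equations give `∂_i ψ = F_i − κ ∑_{j≠i} ψ/(z_i − z_j)` and
`∂_i F_i = ∑_σ (−1)^σ λ_{σ(i)}² I_σ − κ ∑_{j≠i} F_j/(z_i − z_j)`. Differentiating the first identity
once more and summing over `i`, the terms `(F_i + F_j)/(z_i − z_j)` cancel by antisymmetry in
`(i, j)`, the `λ²`-terms add up to `(∑ λ_m²) ψ`, and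
`∑_i (∑_{j≠i} 1/(z_i − z_j))² = ∑_{i≠j} 1/(z_i − z_j)²` (the cross terms cancel over cyclic
triples) merges the `κ²` and `κ` terms into `κ(κ+1) ∑_{i≠j} ψ/(z_i − z_j)²`.
-/

open Finset

noncomputable def partialDeriv {n : ℕ} (i : Fin n) (f : (Fin n → ℂ) → ℂ) :
    (Fin n → ℂ) → ℂ :=
  fun z => fderiv ℂ f z (Pi.single i 1)

open Equiv Filter Topology

section SumIdentities

variable {ι : Type*} [DecidableEq ι]

theorem sum_sum_erase_eq_sum_offDiag {M : Type*} [AddCommMonoid M] (s : Finset ι)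
    (f : ι → ι → M) : ∑ i ∈ s, ∑ j ∈ s.erase i, f i j = ∑ p ∈ s.offDiag, f p.1 p.2 :=
  (sum_finset_product s.offDiag s (fun i => s.erase i) (f := fun p => f p.1 p.2) fun p => by
    simp [mem_offDiag, ne_comm, and_comm]).symm

theorem sum_sum_erase_eq_zero_of_antisymm {M : Type*} [AddCommGroup M] (s : Finset ι)
    {f : ι → ι → M} (hf : ∀ i j, f j i = -f i j) : ∑ i ∈ s, ∑ j ∈ s.erase i, f i j = 0 := by
  rw [sum_sum_erase_eq_sum_offDiag]
  refine sum_involution (fun p _ => p.swap) (fun p _ => ?_) ?_ ?_ fun p _ => p.swap_swap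
  · rw [Prod.fst_swap, Prod.snd_swap, hf, neg_add_cancel]
  · exact fun p hp _ h => (mem_offDiag.1 hp).2.2 (congrArg Prod.fst h).symm
  · intro p hp
    obtain ⟨h1, h2, h12⟩ := mem_offDiag.1 hp
    exact mem_offDiag.2 ⟨h2, h1, h12.symm⟩

theorem sq_sum_eq_sum_sq_add_sum_offDiag {R : Type*} [CommSemiring R] (s : Finset ι)
    (a : ι → R) : (∑ i ∈ s, a i) ^ 2 = ∑ i ∈ s, a i ^ 2 + ∑ p ∈ s.offDiag, a p.1 * a p.2 := by
  rw [sq, sum_mul_sum, ← sum_product', ← diag_union_offDiag,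
    sum_union (disjoint_diag_offDiag s), sum_diag]
  simp only [sq]

theorem sum_eq_zero_of_add_add_eq_zero {α K : Type*} [DivisionRing K] [CharZero K]
    (s : Finset α) (e : α ≃ α) (hs : ∀ x, x ∈ s ↔ e x ∈ s) {f : α → K}
    (hf : ∀ x ∈ s, f x + f (e x) + f (e (e x)) = 0) : ∑ x ∈ s, f x = 0 := by
  have h1 : ∑ x ∈ s, f (e x) = ∑ x ∈ s, f x := sum_equiv e hs fun _ _ => rfl
  have h2 : ∑ x ∈ s, f (e (e x)) = ∑ x ∈ s, f x :=
    (sum_equiv e hs (g := fun y => f (e y)) fun _ _ => rfl).trans h1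
  have h3 : (3 : K) * ∑ x ∈ s, f x = 0 := by
    rw [← sum_eq_zero hf, sum_add_distrib, sum_add_distrib, h1, h2]
    noncomm_ring
  simpa using h3

theorem inv_sub_mul_inv_sub_add_cyclic {K : Type*} [Field K] {a b c : K}
    (hab : a ≠ b) (hac : a ≠ c) (hbc : b ≠ c) :
    (a - b)⁻¹ * (a - c)⁻¹ + (b - c)⁻¹ * (b - a)⁻¹ + (c - a)⁻¹ * (c - b)⁻¹ = 0 := by
  have := sub_ne_zero.2 hab
  have := sub_ne_zero.2 hac
  have := sub_ne_zero.2 hbc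
  have := sub_ne_zero.2 hab.symm
  have := sub_ne_zero.2 hac.symm
  have := sub_ne_zero.2 hbc.symm
  field_simp
  ring

theorem sum_sq_sum_erase_inv_sub [Fintype ι] {K : Type*} [Field K] [CharZero K]
    {w : ι → K} (hw : Function.Injective w) :
    ∑ i, (∑ j ∈ univ.erase i, (w i - w j)⁻¹) ^ 2 =
      ∑ i, ∑ j ∈ univ.erase i, (w i - w j)⁻¹ ^ 2 := by
  simp only [sq_sum_eq_sum_sq_add_sum_offDiag, sum_add_distrib, add_eq_left]
  let distinct : Finset (ι × ι × ι) :=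
    univ.filter fun p => p.1 ≠ p.2.1 ∧ p.1 ≠ p.2.2 ∧ p.2.1 ≠ p.2.2
  rw [← sum_finset_product distinct univ (fun i => (univ.erase i).offDiag)
    (f := fun p => (w p.1 - w p.2.1)⁻¹ * (w p.1 - w p.2.2)⁻¹) fun p => by
      simp [distinct, mem_offDiag, ne_comm]]
  refine sum_eq_zero_of_add_add_eq_zero _ ((prodComm ι (ι × ι)).trans (prodAssoc ι ι ι))
    (fun p => by
      simp only [distinct, mem_filter, mem_univ, true_and, trans_apply, prodComm_apply,
        prodAssoc_apply, Prod.fst_swap, Prod.snd_swap]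
      tauto) fun ⟨i, j, k⟩ hp => ?_
  obtain ⟨hij, hik, hjk⟩ := (mem_filter.1 hp).2
  simpa using inv_sub_mul_inv_sub_add_cyclic (hw.ne hij) (hw.ne hik) (hw.ne hjk)

end SumIdentities

section PartialDeriv

variable {n : ℕ} {f g : (Fin n → ℂ) → ℂ} {z : Fin n → ℂ} (i : Fin n)

theorem partialDeriv_congr_of_eventuallyEq (h : f =ᶠ[𝓝 z] g) :
    partialDeriv i f z = partialDeriv i g z := by
  rw [partialDeriv, partialDeriv, h.fderiv_eq]

theorem partialDeriv_sub (hf : DifferentiableAt ℂ f z) (hg : DifferentiableAt ℂ g z) :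
    partialDeriv i (fun w => f w - g w) z = partialDeriv i f z - partialDeriv i g z := by
  rw [partialDeriv, fderiv_fun_sub hf hg]
  rfl

theorem partialDeriv_const_mul (hf : DifferentiableAt ℂ f z) (c : ℂ) :
    partialDeriv i (fun w => c * f w) z = c * partialDeriv i f z := by
  rw [partialDeriv, fderiv_const_mul hf]
  rfl

theorem partialDeriv_sum {ι : Type*} {s : Finset ι} {F : ι → (Fin n → ℂ) → ℂ}
    (hF : ∀ k ∈ s, DifferentiableAt ℂ (F k) z) :
    partialDeriv i (fun w => ∑ k ∈ s, F k w) z = ∑ k ∈ s, partialDeriv i (F k) z := by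
  rw [partialDeriv, fderiv_fun_sum hF, _root_.sum_apply]
  rfl

theorem partialDeriv_div_sub_apply {j : Fin n} (hf : DifferentiableAt ℂ f z) (hz : z i ≠ z j) :
    partialDeriv i (fun w => f w / (w i - w j)) z =
      partialDeriv i f z / (z i - z j) - f z / (z i - z j) ^ 2 := by
  have hne : z i - z j ≠ 0 := sub_ne_zero.2 hz
  have hji : j ≠ i := fun h => hz (h ▸ rfl)
  have hd := (hasFDerivAt_apply (𝕜 := ℂ) i z).sub (hasFDerivAt_apply j z)
  have h := hf.hasFDerivAt.mul ((hasDerivAt_inv hne).comp_hasFDerivAt z hd)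
  have hfun : (fun w => f w / (w i - w j)) = f * (fun y => y⁻¹) ∘ ((· i) - (· j)) := by
    funext w
    simp [div_eq_mul_inv]
  rw [partialDeriv, hfun, h.fderiv, partialDeriv]
  simp only [add_apply, smul_apply, sub_apply, ContinuousLinearMap.proj_apply, smul_eq_mul,
    Pi.single_eq_same, Pi.single_eq_of_ne hji, Function.comp_apply, Pi.sub_apply]
  field_simp
  ring

end PartialDeriv

section KZ

variable {n : ℕ}

noncomputable def antisymmetrization (I : Perm (Fin n) → (Fin n → ℂ) → ℂ)
    (w : Fin n → ℂ) : ℂ :=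
  ∑ σ : Perm (Fin n), ((Perm.sign σ : ℤ) : ℂ) * I σ w

/-- The KZ equations close up on these sums: `∂_m` of the `g`-sum at slot `m` involves only the
`g λ`-sum at slot `m` and the `g`-sums at the other slots. -/
noncomputable def signedSum (I : Perm (Fin n) → (Fin n → ℂ) → ℂ) (g : Fin n → ℂ) (m : Fin n)
    (w : Fin n → ℂ) : ℂ :=
  ∑ σ : Perm (Fin n), ((Perm.sign σ : ℤ) : ℂ) * g (σ m) * I σ w

def IsKZSolution (κ : ℂ) (lam : Fin n → ℂ) (U : Set (Fin n → ℂ))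
    (I : Perm (Fin n) → (Fin n → ℂ) → ℂ) : Prop :=
  ∀ σ : Perm (Fin n), ∀ i : Fin n, ∀ z ∈ U,
    partialDeriv i (I σ) z =
      κ * ∑ j ∈ univ.erase i, I (σ * swap i j) z / (z i - z j) + lam (σ i) * I σ z

variable {I : Perm (Fin n) → (Fin n → ℂ) → ℂ}

theorem signedSum_one (m : Fin n) : signedSum I 1 m = antisymmetrization I := by
  funext w
  simp [signedSum, antisymmetrization]

theorem sum_signedSum (g : Fin n → ℂ) (w : Fin n → ℂ) :
    ∑ m, signedSum I g m w = (∑ m, g m) * antisymmetrization I w := by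
  simp only [signedSum, antisymmetrization, mul_sum]
  rw [sum_comm]
  refine sum_congr rfl fun σ _ => ?_
  rw [← Equiv.sum_comp σ g, sum_mul]
  exact sum_congr rfl fun m _ => by ring

theorem sign_mul_swap_mul_apply (g : Fin n → ℂ) {i j : Fin n} (hij : i ≠ j)
    (σ : Perm (Fin n)) :
    ((Perm.sign (σ * swap i j) : ℤ) : ℂ) * g ((σ * swap i j) i) =
      -(((Perm.sign σ : ℤ) : ℂ) * g (σ j)) := by
  rw [Perm.sign_mul, Perm.sign_swap hij, Perm.mul_apply, swap_apply_left]
  push_cast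
  ring

variable {κ : ℂ} {lam : Fin n → ℂ} {U : Set (Fin n → ℂ)}

theorem differentiableAt_signedSum (hU : IsOpen U) (hI : ∀ σ, DifferentiableOn ℂ (I σ) U)
    (g : Fin n → ℂ) (m : Fin n) {z : Fin n → ℂ} (hz : z ∈ U) :
    DifferentiableAt ℂ (signedSum I g m) z := by
  unfold signedSum
  exact DifferentiableAt.fun_sum fun σ _ =>
    ((hI σ).differentiableAt (hU.mem_nhds hz)).const_mul _

theorem IsKZSolution.sum_mul_partialDeriv (hKZ : IsKZSolution κ lam U I)
    (c : Perm (Fin n) → ℂ) (i : Fin n) {z : Fin n → ℂ} (hz : z ∈ U) :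
    ∑ σ, c σ * partialDeriv i (I σ) z =
      κ * ∑ j ∈ univ.erase i, (∑ σ, c (σ * swap i j) * I σ z) / (z i - z j) +
        ∑ σ, c σ * lam (σ i) * I σ z := by
  have hreindex : ∀ j, ∑ σ, c σ * I (σ * swap i j) z = ∑ σ, c (σ * swap i j) * I σ z :=
    fun j => Fintype.sum_equiv (Equiv.mulRight (swap i j)) _ _ fun σ => by
      simp [mul_assoc]
  simp only [hKZ _ i z hz, mul_add, sum_add_distrib, mul_sum, ← hreindex, sum_div]
  rw [sum_comm]
  congr 1
  · exact sum_congr rfl fun _ _ => sum_congr rfl fun _ _ => by ring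
  · exact sum_congr rfl fun _ _ => by ring

theorem IsKZSolution.partialDeriv_signedSum (hKZ : IsKZSolution κ lam U I) (hU : IsOpen U)
    (hI : ∀ σ, DifferentiableOn ℂ (I σ) U) (g : Fin n → ℂ) (i : Fin n) {z : Fin n → ℂ}
    (hz : z ∈ U) :
    partialDeriv i (signedSum I g i) z =
      signedSum I (g * lam) i z - κ * ∑ j ∈ univ.erase i, signedSum I g j z / (z i - z j) := by
  have hdiff : ∀ σ ∈ (univ : Finset (Perm (Fin n))),
      DifferentiableAt ℂ (fun w => ((Perm.sign σ : ℤ) : ℂ) * g (σ i) * I σ w) z :=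
    fun σ _ => ((hI σ).differentiableAt (hU.mem_nhds hz)).const_mul _
  have hswap : ∀ j ∈ univ.erase i,
      ∑ σ, ((Perm.sign (σ * swap i j) : ℤ) : ℂ) * g ((σ * swap i j) i) * I σ z =
        -signedSum I g j z := fun j hj => by
    simp only [signedSum, ← sum_neg_distrib, neg_mul,
      sign_mul_swap_mul_apply g (ne_of_mem_erase hj).symm]
  unfold signedSum
  rw [partialDeriv_sum i hdiff]
  simp only [fun σ => partialDeriv_const_mul i ((hI σ).differentiableAt (hU.mem_nhds hz))]
  rw [hKZ.sum_mul_partialDeriv _ i hz, sum_congr rfl fun j hj => by rw [hswap j hj, neg_div]]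
  simp only [signedSum, sum_neg_distrib, Pi.mul_apply, mul_assoc]
  ring

theorem IsKZSolution.partialDeriv_antisymmetrization (hKZ : IsKZSolution κ lam U I)
    (hU : IsOpen U) (hI : ∀ σ, DifferentiableOn ℂ (I σ) U) (i : Fin n) {z : Fin n → ℂ}
    (hz : z ∈ U) :
    partialDeriv i (antisymmetrization I) z =
      signedSum I lam i z - κ * ∑ j ∈ univ.erase i, antisymmetrization I z / (z i - z j) := by
  simpa only [signedSum_one, one_mul] using hKZ.partialDeriv_signedSum hU hI 1 i hz

theorem IsKZSolution.partialDeriv_partialDeriv_antisymmetrization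
    (hKZ : IsKZSolution κ lam U I) (hU : IsOpen U)
    (hI : ∀ σ, DifferentiableOn ℂ (I σ) U) (i : Fin n) {z : Fin n → ℂ} (hz : z ∈ U)
    (hzinj : Function.Injective z) :
    partialDeriv i (partialDeriv i (antisymmetrization I)) z =
      signedSum I (lam * lam) i z -
        κ * ∑ j ∈ univ.erase i, (signedSum I lam i z + signedSum I lam j z) * (z i - z j)⁻¹ +
        κ ^ 2 * (∑ j ∈ univ.erase i, (z i - z j)⁻¹) ^ 2 * antisymmetrization I z +
        κ * (∑ j ∈ univ.erase i, (z i - z j)⁻¹ ^ 2) * antisymmetrization I z := by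
  have hψ : ∀ w ∈ U, DifferentiableAt ℂ (antisymmetrization I) w := fun w hw => by
    simpa only [signedSum_one] using differentiableAt_signedSum hU hI 1 i hw
  have hzij : ∀ j ∈ univ.erase i, z i ≠ z j := fun j hj => hzinj.ne (ne_of_mem_erase hj).symm
  have hquot : ∀ j ∈ univ.erase i,
      DifferentiableAt ℂ (fun w => antisymmetrization I w / (w i - w j)) z := fun j hj => by
    simpa only [div_eq_mul_inv] using (hψ z hz).fun_mul
      (((differentiableAt_apply i z).fun_sub (differentiableAt_apply j z)).fun_inv
        (sub_ne_zero.2 (hzij j hj)))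
  have hev : partialDeriv i (antisymmetrization I) =ᶠ[𝓝 z] fun w =>
      signedSum I lam i w - κ * ∑ j ∈ univ.erase i, antisymmetrization I w / (w i - w j) :=
    eventually_of_mem (hU.mem_nhds hz) fun w hw => hKZ.partialDeriv_antisymmetrization hU hI i hw
  rw [partialDeriv_congr_of_eventuallyEq i hev,
    partialDeriv_sub i (differentiableAt_signedSum hU hI lam i hz)
      ((DifferentiableAt.fun_sum hquot).const_mul κ),
    partialDeriv_const_mul i (DifferentiableAt.fun_sum hquot), partialDeriv_sum i hquot,
    hKZ.partialDeriv_signedSum hU hI lam i hz,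
    sum_congr rfl fun j hj => partialDeriv_div_sub_apply i (hψ z hz) (hzij j hj),
    hKZ.partialDeriv_antisymmetrization hU hI i hz]
  simp only [div_eq_mul_inv, ← inv_pow, add_mul, sub_mul, sum_add_distrib, sum_sub_distrib,
    ← mul_sum]
  ring

end KZ

theorem matsuo_cherednik_antisymmetrization_general
    (n : ℕ) (κ : ℂ) (lam : Fin n → ℂ)
    (U : Set (Fin n → ℂ)) (hU : IsOpen U)
    (hsep : ∀ z ∈ U, ∀ i j : Fin n, i ≠ j → z i ≠ z j)
    (I : Equiv.Perm (Fin n) → (Fin n → ℂ) → ℂ)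
    (hhol : ∀ σ, DifferentiableOn ℂ (I σ) U)
    (hKZ : ∀ σ : Equiv.Perm (Fin n), ∀ i : Fin n, ∀ z ∈ U,
      partialDeriv i (I σ) z =
        κ * ∑ j ∈ univ.erase i, I (σ * Equiv.swap i j) z / (z i - z j) +
          lam (σ i) * I σ z) :
    ∀ z ∈ U,
      -(∑ i : Fin n, partialDeriv i (partialDeriv i
          (fun w => ∑ σ : Equiv.Perm (Fin n), ((Equiv.Perm.sign σ : ℤ) : ℂ) * I σ w)) z) +
        κ * (κ + 1) * ∑ i : Fin n, ∑ j ∈ univ.erase i,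
          (∑ σ : Equiv.Perm (Fin n), ((Equiv.Perm.sign σ : ℤ) : ℂ) * I σ z) / (z i - z j) ^ 2 =
      (-(∑ i : Fin n, lam i ^ 2)) *
        ∑ σ : Equiv.Perm (Fin n), ((Equiv.Perm.sign σ : ℤ) : ℂ) * I σ z := by
  intro z hz
  have hinj : Function.Injective z := fun i j h => by_contra fun hij => hsep z hz i j hij h
  change -(∑ i, partialDeriv i (partialDeriv i (antisymmetrization I)) z) +
      κ * (κ + 1) * ∑ i, ∑ j ∈ univ.erase i, antisymmetrization I z / (z i - z j) ^ 2 =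
    -(∑ i, lam i ^ 2) * antisymmetrization I z
  have hcross : ∑ i, ∑ j ∈ univ.erase i,
      (signedSum I lam i z + signedSum I lam j z) * (z i - z j)⁻¹ = 0 :=
    sum_sum_erase_eq_zero_of_antisymm _ fun i j => by rw [add_comm, ← neg_sub, inv_neg, mul_neg]
  simp only [sum_congr rfl fun i _ =>
      IsKZSolution.partialDeriv_partialDeriv_antisymmetrization hKZ hU hhol i hz hinj,
    sum_add_distrib, sum_sub_distrib, ← mul_sum, ← sum_mul, sum_signedSum, hcross,
    sum_sq_sum_erase_inv_sub hinj, div_eq_mul_inv, ← inv_pow, ← sq, Pi.pow_apply]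
  ring

/-- **Matsuo–Cherednik correspondence, antisymmetrization.** If holomorphic functions
`I σ`, `σ ∈ S_n`, solve the KZ equations in components on an open set `U` where the
coordinates are pairwise distinct, then `ψ = Σ_σ (−1)^σ I σ` satisfies the
Calogero–Moser eigenvalue equation with coupling `κ(κ+1)` and eigenvalue
`E = −(λ₁² + ⋯ + λ_n²)`. -/
theorem matsuo_cherednik_antisymmetrization
    (n : ℕ) (hn : 2 ≤ n) (κ : ℂ) (lam : Fin n → ℂ)
    (U : Set (Fin n → ℂ)) (hU : IsOpen U)
    (hsep : ∀ z ∈ U, ∀ i j : Fin n, i ≠ j → z i ≠ z j)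
    (I : Equiv.Perm (Fin n) → (Fin n → ℂ) → ℂ)
    (hhol : ∀ σ, DifferentiableOn ℂ (I σ) U)
    (hKZ : ∀ σ : Equiv.Perm (Fin n), ∀ i : Fin n, ∀ z ∈ U,
      partialDeriv i (I σ) z =
        κ * ∑ j ∈ univ.erase i, I (σ * Equiv.swap i j) z / (z i - z j) +
          lam (σ i) * I σ z) :
    ∀ z ∈ U,
      -(∑ i : Fin n, partialDeriv i (partialDeriv i
          (fun w => ∑ σ : Equiv.Perm (Fin n), ((Equiv.Perm.sign σ : ℤ) : ℂ) * I σ w)) z) +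
        κ * (κ + 1) * ∑ i : Fin n, ∑ j ∈ univ.erase i,
          (∑ σ : Equiv.Perm (Fin n), ((Equiv.Perm.sign σ : ℤ) : ℂ) * I σ z) / (z i - z j) ^ 2 =
      (-(∑ i : Fin n, lam i ^ 2)) *
        ∑ σ : Equiv.Perm (Fin n), ((Equiv.Perm.sign σ : ℤ) : ℂ) * I σ z :=
  matsuo_cherednik_antisymmetrization_general n κ lam U hU hsep I hhol hKZ
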